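/- arXiv:0805.3051 — 2 statements merged into one kernel-verified Lean document; each statement's English description precedes it below -/
import Mathlib

section
/- Let d be a natural number and let W be a real linear subspace of ℝ^d (the space of functions Fin d → ℝ). Then every element of S_W = {v : Fin d → ℕ | the coordinatewise real image of v lies in W} can be written as a finite sum (possibly empty, giving 0) of minimal nonzero elements of S_W, where minimality is with respect to the componentwise partial order. -/
/-!
Induct on `v` along the well-founded componentwise order. If `v ≠ 0` is not minimal, some nonzero
`w ∈ S_W` lies strictly below it; then `v - w ∈ S_W` as well, because `W` is closed under
subtraction, and both `w` and `v - w` are strictly smaller than `v`, so `v = w + (v - w)` is a sum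
of minimal elements by induction.
-/

section CanonicallyOrdered

variable {M : Type*} [AddCommMonoid M] [PartialOrder M] [CanonicallyOrderedAdd M] [Sub M]
  [OrderedSub M]

theorem tsub_lt_self_of_le_of_ne_zero [IsLeftCancelAdd M] {v w : M} (hwv : w ≤ v) (hw : w ≠ 0) :
    v - w < v := by
  refine tsub_le_self.lt_of_ne fun h => hw ?_
  have : v + w = v + 0 := by rw [add_zero, ← h, tsub_add_cancel_of_le hwv, h]
  exact add_left_cancel this

theorem exists_multiset_sum_eq_of_minimal_nonzero [IsLeftCancelAdd M] [WellFoundedLT M]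
    {S : Set M} (tsub_mem : ∀ v ∈ S, ∀ w ∈ S, w ≤ v → v - w ∈ S) {v : M} (hv : v ∈ S) :
    ∃ l : Multiset M, (∀ m ∈ l, Minimal (fun w => w ∈ S ∧ w ≠ 0) m) ∧ l.sum = v := by
  induction v using WellFoundedLT.induction with
  | _ v ih =>
    by_cases hv0 : v = 0
    · exact ⟨0, by simp, by simp [hv0]⟩
    by_cases hmin : Minimal (fun w => w ∈ S ∧ w ≠ 0) v
    · exact ⟨{v}, by simpa using hmin, Multiset.sum_singleton v⟩
    obtain ⟨w, hwS, hw0, hwv⟩ : ∃ w ∈ S, w ≠ 0 ∧ w < v := by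
      simpa [Minimal, hv, hv0, lt_iff_le_not_ge] using hmin
    obtain ⟨l₁, hl₁, rfl⟩ := ih w hwv hwS
    obtain ⟨l₂, hl₂, hl₂sum⟩ :=
      ih (v - l₁.sum) (tsub_lt_self_of_le_of_ne_zero hwv.le hw0) (tsub_mem v hv _ hwS hwv.le)
    refine ⟨l₁ + l₂, fun m hm => (Multiset.mem_add.mp hm).elim (hl₁ m) (hl₂ m), ?_⟩
    rw [Multiset.sum_add, hl₂sum, add_tsub_cancel_of_le hwv.le]

end CanonicallyOrdered

theorem natCast_sub_mem_of_le {d : ℕ} {W : Submodule ℝ (Fin d → ℝ)} {v w : Fin d → ℕ}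
    (hv : (fun i => (v i : ℝ)) ∈ W) (hw : (fun i => (w i : ℝ)) ∈ W) (hwv : w ≤ v) :
    (fun i => ((v - w) i : ℝ)) ∈ W := by
  have : (fun i => ((v - w) i : ℝ)) = (fun i => (v i : ℝ)) - fun i => (w i : ℝ) := by
    funext i
    exact Nat.cast_sub (hwv i)
  rw [this]
  exact W.sub_mem hv hw

/-- Generation part of Lemma 3.1: every element of
`S_W = {v : Fin d → ℕ | (fun i => (v i : ℝ)) ∈ W}` is a finite (possibly empty)
sum of minimal nonzero elements of `S_W`, minimality being with respect to the
componentwise partial order. -/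
theorem generated_by_minimal_elements (d : ℕ) (W : Submodule ℝ (Fin d → ℝ))
    (v : Fin d → ℕ) (hv : (fun i => (v i : ℝ)) ∈ W) :
    ∃ l : Multiset (Fin d → ℕ),
      (∀ m ∈ l,
        (fun i => (m i : ℝ)) ∈ W ∧ m ≠ 0 ∧
        ∀ w : Fin d → ℕ, (fun i => (w i : ℝ)) ∈ W → w ≠ 0 →
          (∀ i, w i ≤ m i) → w = m) ∧
      l.sum = v := by
  obtain ⟨l, hl, hsum⟩ := exists_multiset_sum_eq_of_minimal_nonzero
    (S := {u : Fin d → ℕ | (fun i => (u i : ℝ)) ∈ W})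
    (fun _ hv _ hw hwv => natCast_sub_mem_of_le hv hw hwv) hv
  refine ⟨l, fun m hm => ?_, hsum⟩
  obtain ⟨⟨hmW, hm0⟩, hmin⟩ := hl m hm
  exact ⟨hmW, hm0, fun w hwW hw0 hwm => le_antisymm hwm (hmin ⟨hwW, hw0⟩ hwm)⟩
end

section
/- Let d be a natural number and let W be a real linear subspace of ℝ^d (the space of functions Fin d → ℝ). Then the additive submonoid of ℕ^d (functions Fin d → ℕ under pointwise addition) consisting of those v whose coordinatewise real image lies in W is a finitely generated additive monoid: there exist finitely many elements u_1, …, u_k of this submonoid such that every element of the submonoid is a sum of copies of the u_i (equivalently, an ℕ-linear combination of u_1, …, u_k). -/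
/-!
The generators are the minimal nonzero elements of `S_W`. They form an antichain of `ℕ^d`, hence
are finitely many by Dickson's lemma. Since `W` is a subspace, `S_W` is closed under the
differences `v - m` with `m ≤ v`. So subtracting from `v ∈ S_W` a minimal nonzero element below
it stays in `S_W`, and well-founded induction writes `v` as a sum of minimal elements.
-/

open Set

namespace AddSubmonoid

variable {α : Type*} [AddCommMonoid α] [PartialOrder α] [IsOrderedCancelAddMonoid α]
  [CanonicallyOrderedAdd α] [WellFoundedLT α]

theorem closure_setOf_minimal_ne_zero_eq (S : AddSubmonoid α)
    (hS : ∀ ⦃a b⦄, a ∈ S → a + b ∈ S → b ∈ S) :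
    closure {m | Minimal (fun x => x ∈ S ∧ x ≠ 0) m} = S := by
  refine le_antisymm (closure_le.2 fun _ hm => hm.1.1) fun v hv => ?_
  induction v using WellFoundedLT.induction with
  | ind v ih =>
    obtain rfl | hv0 := eq_or_ne v 0
    · exact zero_mem _
    obtain ⟨m, hmv, hm⟩ :=
      exists_minimal_le_of_wellFoundedLT (fun x => x ∈ S ∧ x ≠ 0) v ⟨hv, hv0⟩
    obtain ⟨w, rfl⟩ := exists_add_of_le hmv
    have hw : w < m + w := lt_add_of_pos_left w (pos_iff_ne_zero.2 hm.prop.2)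
    exact add_mem (subset_closure hm) (ih w hw (hS hm.prop.1 hv))

end AddSubmonoid

section natPoints

variable {ι : Type*}

/-- The submonoid `S_W`. -/
def natPoints (W : Submodule ℝ (ι → ℝ)) : AddSubmonoid (ι → ℕ) :=
  W.toAddSubmonoid.comap (AddMonoidHom.compLeft (Nat.castAddMonoidHom ℝ) ι)

theorem mem_natPoints {W : Submodule ℝ (ι → ℝ)} {v : ι → ℕ} :
    v ∈ natPoints W ↔ (fun i => (v i : ℝ)) ∈ W :=
  Iff.rfl

theorem mem_natPoints_of_add_mem {W : Submodule ℝ (ι → ℝ)} {a b : ι → ℕ}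
    (ha : a ∈ natPoints W) (hab : a + b ∈ natPoints W) : b ∈ natPoints W := by
  simp only [natPoints, AddSubmonoid.mem_comap, map_add] at ha hab ⊢
  exact (W.add_mem_iff_right ha).1 hab

end natPoints

/-- Lemma 3.1: the additive submonoid of `Fin d → ℕ` consisting of those `v`
whose coordinatewise real image lies in a linear subspace `W` of `ℝ^d` is
finitely generated: there are finitely many elements `u 0, …, u (k-1)` of the
submonoid such that every element is an `ℕ`-linear combination of them. -/
theorem submonoid_finitely_generated (d : ℕ) (W : Submodule ℝ (Fin d → ℝ)) :
    ∃ (k : ℕ) (u : Fin k → (Fin d → ℕ)),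
      (∀ j, (fun i => (u j i : ℝ)) ∈ W) ∧
      ∀ v : Fin d → ℕ, (fun i => (v i : ℝ)) ∈ W →
        ∃ c : Fin k → ℕ, v = ∑ j, c j • u j := by
  obtain ⟨k, u, hu⟩ := (WellQuasiOrderedLE.finite_of_isAntichain
    (setOfPred_minimal_antichain fun x => x ∈ natPoints W ∧ x ≠ 0)).fin_embedding
  have hgen : AddSubmonoid.closure (range u) = natPoints W := by
    rw [hu]
    exact (natPoints W).closure_setOf_minimal_ne_zero_eq fun _ _ => mem_natPoints_of_add_mem
  refine ⟨k, u, fun j => ?_, fun v hv => ?_⟩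
  · rw [← mem_natPoints, ← hgen]
    exact AddSubmonoid.subset_closure (mem_range_self j)
  · exact AddSubmonoid.exists_of_mem_closure_range u v (hgen ▸ hv)
end
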